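/- arXiv:2112.13278 — 2 statements merged into one kernel-verified Lean document; each statement's English description precedes it below -/
import Mathlib

section
/- Let (B, M) be a Noetherian local ring with M-adic completion T, and let S be a quasi-local subring of B with maximal ideal S ∩ M such that the map S → B/M² is surjective and IB ∩ S = I for every finitely generated ideal I of S. Then S is Noetherian and the completion of S at S ∩ M is isomorphic to T. -/
/-!
Every ideal `I` of `S` is finitely generated: `IB` is generated by the images of finitely many
elements of `I`, and the ideal `I₀` they span satisfies `I ⊆ IB ∩ S = I₀B ∩ S = I₀`.
Writing `m` for the maximal ideal of `S` and `M` for that of `B`, surjectivity of `S → B/M²` and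
Nakayama's lemma give `M = mB`, hence `Mⁿ = mⁿB` and `Mⁿ ∩ S = mⁿ`. An induction using
`B = S + M` shows that `S → B/Mⁿ` is onto for all `n`, so `S/mⁿ ≅ B/Mⁿ` compatibly in `n`,
and the two inverse limits agree.
-/

open IsLocalRing

section

variable {R B : Type*} [CommRing R] [CommRing B]

theorem isNoetherianRing_of_comap_map_eq [IsNoetherianRing B] (f : R →+* B)
    (h : ∀ I : Ideal R, I.FG → (I.map f).comap f = I) : IsNoetherianRing R := by
  classical
  refine (isNoetherianRing_iff_ideal_fg R).mpr fun I => ?_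
  obtain ⟨t, htI, hspan⟩ := (Submodule.fg_span_iff_fg_span_finset_subset (f '' I)).mp
    (IsNoetherian.noetherian (I.map f))
  obtain ⟨u, huI, rfl⟩ := Finset.subset_set_image_iff.mp htI
  have hu : (Ideal.span (u : Set R)).map f = I.map f := by
    rw [Ideal.map_span, ← Finset.coe_image]; exact hspan.symm
  suffices I = Ideal.span u from this ▸ ⟨u, rfl⟩
  refine le_antisymm ?_ (Ideal.span_le.mpr huI)
  calc I ≤ (I.map f).comap f := Ideal.le_comap_map
    _ = Ideal.span u := by rw [← hu, h _ ⟨u, rfl⟩]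

theorem Ideal.Quotient.surjective_mk_comp_iff {f : R →+* B} {J : Ideal B} :
    Function.Surjective ((Ideal.Quotient.mk J).comp f) ↔ ∀ b, ∃ r, b - f r ∈ J := by
  simp only [Function.Surjective, Ideal.Quotient.mk_surjective.forall, RingHom.comp_apply,
    Ideal.Quotient.eq]
  refine forall_congr' fun b => exists_congr fun r => ?_
  rw [← neg_mem_iff, neg_sub]

theorem map_comap_eq_of_surjective_mk_sq {J : Ideal B} (hJ : J.FG)
    (hJac : J ≤ (⊥ : Ideal B).jacobson) (f : R →+* B)
    (hf : Function.Surjective ((Ideal.Quotient.mk (J ^ 2)).comp f)) :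
    (J.comap f).map f = J := by
  refine le_antisymm Ideal.map_comap_le
    (Submodule.le_of_le_smul_of_le_jacobson_bot hJ hJac fun b hb => ?_)
  obtain ⟨r, hr⟩ := Ideal.Quotient.surjective_mk_comp_iff.mp hf b
  have hrJ : f r ∈ J := by
    simpa using J.sub_mem hb (Ideal.pow_le_self two_ne_zero hr)
  rw [← add_sub_cancel (f r) b]
  refine Submodule.add_mem_sup (Ideal.mem_map_of_mem f hrJ) ?_
  rwa [Ideal.smul_eq_mul, ← sq]

section

variable {f : R →+* B} {I : Ideal R}

theorem exists_sub_mem_map_pow_succ (hf : ∀ b, ∃ r, b - f r ∈ I.map f) {n : ℕ} {x : B}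
    (hx : x ∈ (I ^ n).map f) : ∃ t ∈ I ^ n, x - f t ∈ (I.map f) ^ (n + 1) := by
  induction hx using Submodule.span_induction with
  | mem x hx =>
    obtain ⟨t, ht, rfl⟩ := hx
    exact ⟨t, ht, by simp⟩
  | zero => exact ⟨0, zero_mem _, by simp⟩
  | add x y _ _ hx hy =>
    obtain ⟨t, ht, hxt⟩ := hx
    obtain ⟨u, hu, hyu⟩ := hy
    refine ⟨t + u, add_mem ht hu, ?_⟩
    rw [map_add, add_sub_add_comm]
    exact add_mem hxt hyu
  | smul a x _ hx =>
    obtain ⟨t, ht, hxt⟩ := hx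
    obtain ⟨r, hr⟩ := hf a
    refine ⟨r * t, Ideal.mul_mem_left _ r ht, ?_⟩
    have hft : f t ∈ (I.map f) ^ n := Ideal.map_pow f I n ▸ Ideal.mem_map_of_mem f ht
    have : a • x - f (r * t) = a * (x - f t) + (a - f r) * f t := by
      rw [smul_eq_mul, map_mul]; ring
    rw [this]
    refine add_mem (Ideal.mul_mem_left _ a hxt) ?_
    rw [pow_succ']
    exact Ideal.mul_mem_mul hr hft

theorem surjective_mk_pow_comp_of_surjective_mk_comp
    (hf : Function.Surjective ((Ideal.Quotient.mk (I.map f)).comp f)) (n : ℕ) :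
    Function.Surjective ((Ideal.Quotient.mk (I.map f ^ n)).comp f) := by
  rw [Ideal.Quotient.surjective_mk_comp_iff] at hf ⊢
  induction n with
  | zero => exact fun b => ⟨0, by simp⟩
  | succ n ih =>
    intro b
    obtain ⟨r, hr⟩ := ih b
    obtain ⟨t, -, ht⟩ := exists_sub_mem_map_pow_succ hf (Ideal.map_pow f I n ▸ hr)
    exact ⟨r + t, by rwa [map_add, ← sub_sub]⟩

end

namespace AdicCompletion

theorem factorPow_evalₐ (I : Ideal R) {m n : ℕ} (h : m ≤ n)
    (x : AdicCompletion I R) :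
    Ideal.Quotient.factorPow I h (evalₐ I n x) = evalₐ I m x := by
  obtain ⟨x, rfl⟩ := AdicCompletion.mk_surjective I R x
  rw [evalₐ_mk, evalₐ_mk, Ideal.Quotient.factor_mk]
  exact Ideal.mk_eq_mk I h x

variable {f : R →+* B} {I : Ideal R} {J : Ideal B}

theorem exists_ringEquiv_of_comap_pow_eq (hcomap : ∀ n, (J ^ n).comap f = I ^ n)
    (hsurj : ∀ n, Function.Surjective ((Ideal.Quotient.mk (J ^ n)).comp f)) :
    ∃ φ : AdicCompletion I R ≃+* AdicCompletion J B,
      ∀ r, φ (algebraMap R _ r) = algebraMap B _ (f r) := by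
  let e n : R ⧸ I ^ n ≃+* B ⧸ J ^ n :=
    RingEquiv.ofBijective (Ideal.quotientMap _ f (hcomap n).ge)
      ⟨Ideal.quotientMap_injective' (hcomap n).le, fun y => by
        obtain ⟨r, hr⟩ := hsurj n y
        exact ⟨Ideal.Quotient.mk _ r, hr⟩⟩
  have he {m n : ℕ} (h : m ≤ n) (y : R ⧸ I ^ n) :
      Ideal.Quotient.factorPow J h (e n y) = e m (Ideal.Quotient.factorPow I h y) := by
    obtain ⟨r, rfl⟩ := Ideal.Quotient.mk_surjective y
    rfl
  let φ := liftRingHom J (fun n => (e n : R ⧸ I ^ n →+* B ⧸ J ^ n).comp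
      (evalₐ I n : AdicCompletion I R →+* R ⧸ I ^ n))
    fun h => by ext x; simp [he, factorPow_evalₐ]
  let ψ := liftRingHom I (fun n => ((e n).symm : B ⧸ J ^ n →+* R ⧸ I ^ n).comp
      (evalₐ J n : AdicCompletion J B →+* B ⧸ J ^ n))
    fun h => by
      ext y
      apply (e _).injective
      simp [← he, factorPow_evalₐ]
  refine ⟨RingEquiv.ofRingHom φ ψ ?_ ?_, fun r => ext_evalₐ fun n => ?_⟩
  · exact RingHom.ext fun x => ext_evalₐ fun n => by simp [φ, ψ]
  · exact RingHom.ext fun x => ext_evalₐ fun n => by simp [φ, ψ]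
  · simp [φ]
    rfl

end AdicCompletion

end

/-- If `S` is a quasi-local subring of a local ring `B` with surjective map to `B/M²` and
good contraction of finitely generated ideals, then `S` is Noetherian and has the same
completion as `B`. -/
theorem stmt_5 (B : Type*) [CommRing B] [IsNoetherianRing B] [IsLocalRing B]
    (S : Subring B) [IsLocalRing ↥S]
    (hmax : IsLocalRing.maximalIdeal ↥S = (IsLocalRing.maximalIdeal B).comap S.subtype)
    (hsurj : Function.Surjective
      ((Ideal.Quotient.mk ((IsLocalRing.maximalIdeal B) ^ 2)).comp S.subtype))
    (hcontr : ∀ I : Ideal ↥S, I.FG → (I.map S.subtype).comap S.subtype = I) :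
    IsNoetherianRing ↥S ∧
      ∃ φ : AdicCompletion (IsLocalRing.maximalIdeal ↥S) ↥S ≃+*
              AdicCompletion (IsLocalRing.maximalIdeal B) B,
        ∀ s : ↥S,
          φ (algebraMap ↥S (AdicCompletion (IsLocalRing.maximalIdeal ↥S) ↥S) s) =
            algebraMap B (AdicCompletion (IsLocalRing.maximalIdeal B) B) (s : B) := by
  have hNoeth : IsNoetherianRing S := isNoetherianRing_of_comap_map_eq S.subtype hcontr
  have hmap : (maximalIdeal S).map S.subtype = maximalIdeal B := by
    rw [hmax]
    exact map_comap_eq_of_surjective_mk_sq (IsNoetherian.noetherian _)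
      (jacobson_eq_maximalIdeal ⊥ bot_ne_top).ge S.subtype hsurj
  have hcomap (n : ℕ) : (maximalIdeal B ^ n).comap S.subtype = maximalIdeal S ^ n := by
    rw [← hmap, ← Ideal.map_pow]
    exact hcontr _ (IsNoetherian.noetherian _)
  have hsurj₁ : Function.Surjective
      ((Ideal.Quotient.mk ((maximalIdeal S).map S.subtype)).comp S.subtype) :=
    hmap ▸ (Ideal.Quotient.factor_surjective (Ideal.pow_le_self two_ne_zero)).comp hsurj
  refine ⟨hNoeth, AdicCompletion.exists_ringEquiv_of_comap_pow_eq hcomap fun n => ?_⟩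
  exact hmap ▸ surjective_mk_pow_comp_of_surjective_mk_comp hsurj₁ n
end

section
/- Let (B, M) be a reduced local ring containing the rational numbers, with B/M uncountable, |B| = |B/M|, and at least two distinct minimal primes Q₁, Q₂. Then there exists a quasi-local subring S of B with maximal ideal S ∩ M such that: the map S → B/M² is surjective; IB ∩ S = I for every finitely generated ideal I of S; Q₁ ∩ S = Q₂ ∩ S; and for every ideal J of B with J ⊄ Q₁ and J ⊄ Q₂, the ideal of B generated by S ∩ J equals J. -/
/-!
`S` is the union of a transfinite chain of subrings `R`, each of cardinality `< |B/𝔪|` and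
*gluing* `Q₁` and `Q₂` (`x ∈ Q₁ ↔ x ∈ Q₂` for `x ∈ R`). The requirements (hit every coset of
`𝔪²`; make every ideal `J ⊄ Q₁, Q₂` generated by its elements in `S`; write every
`c ∈ (a₁, …, aₙ)B ∩ S` with `aᵢ ∈ S` as `∑ fᵢ aᵢ` with `fᵢ ∈ S`) are listed in order type
`|B/𝔪| = |B|`, each one cofinally often, so that each is met at a stage where its data already
lies in the chain.

One step adjoins a single element `t` from a coset `b + W` with `W ⊄ Q₁, Q₂`. As `R` is small
and `|B/Qᵢ| ≥ |B/𝔪|` is uncountable, `t` can be taken transcendental over `R` modulo `Q₁` and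
modulo `Q₂`; then `p(t) ∈ Qᵢ` only if all coefficients of `p` lie in `Qᵢ`, so `R[t]` is still
gluing. Nakayama turns approximations of generators modulo `𝔪J` into generators of `J`, and the
contraction requirement is met one generator at a time. When a generator lies in a minimal prime,
reducedness provides an annihilator outside that prime; when `c = f a` with `a ∉ Q₁ ∪ Q₂` the
coefficient `f` is forced, but `a ^ d R[f] ⊆ R` keeps the gluing. Contraction of principal ideals
makes every element of `S \ 𝔪` a unit of `S`, so `S` is local with maximal ideal `S ∩ 𝔪`.
-/

open Cardinal Polynomial Set

universe u

section Residues

variable {B : Type*} [CommRing B]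

theorem Ideal.exists_mem_mk_add_notMem {P : Ideal B} [P.IsPrime] {W : Ideal B} (hW : ¬ W ≤ P)
    {A : Set (B ⧸ P)} (hA : #A < #(B ⧸ P)) (b : B) :
    ∃ w ∈ W, Ideal.Quotient.mk P (b + w) ∉ A := by
  obtain ⟨x, hxW, hxP⟩ := SetLike.not_le_iff_exists.mp hW
  by_contra! h
  have hx : Ideal.Quotient.mk P x ≠ 0 := by rwa [Ne, Ideal.Quotient.eq_zero_iff_mem]
  have hmem : ∀ z, Ideal.Quotient.mk P b + Ideal.Quotient.mk P x * z ∈ A :=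
    Ideal.Quotient.mk_surjective.forall.2 fun y => by
      simpa using h (x * y) (W.mul_mem_right y hxW)
  refine hA.not_ge (mk_le_of_injective (f := fun z => (⟨_, hmem z⟩ : A)) fun z z' e => ?_)
  exact mul_left_cancel₀ hx (add_left_cancel (congrArg Subtype.val e))

theorem IsLocalRing.mk_quotient_maximalIdeal_le [IsLocalRing B] (P : Ideal B) [P.IsPrime] :
    #(B ⧸ IsLocalRing.maximalIdeal B) ≤ #(B ⧸ P) :=
  mk_le_of_surjective
    (Ideal.Quotient.factor_surjective (IsLocalRing.le_maximalIdeal Ideal.IsPrime.ne_top'))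

theorem Ideal.exists_notMem_mul_eq_zero_of_mem_minimalPrimes [IsReduced B] {Q : Ideal B}
    (hQ : Q ∈ minimalPrimes B) {x : B} (hx : x ∈ Q) : ∃ s ∉ Q, s * x = 0 := by
  have := hQ.1.1
  have : Ring.KrullDimLE 0 (Localization.AtPrime Q) := .of_isLocalization _ hQ _
  let : Field (Localization.AtPrime Q) := Ring.KrullDimLE.isField_of_isReduced.toField
  obtain ⟨⟨s, hs⟩, hsx⟩ := (IsLocalization.map_eq_zero_iff Q.primeCompl
    (Localization.AtPrime Q) x).mp (by
      rw [← Ideal.mem_bot, ← IsLocalRing.maximalIdeal_eq_bot,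
        ← Localization.AtPrime.map_eq_maximalIdeal]
      exact Ideal.mem_map_of_mem _ hx)
  exact ⟨s, hs, hsx⟩

end Residues

section Adjunction

variable {B : Type*} [CommRing B]

/-- `z` is transcendental over the image of `R` in `B ⧸ P`, stated without forming that image. -/
def Subring.IsTranscendentalMod (R : Subring B) (P : Ideal B) (z : B ⧸ P) : Prop :=
  ∀ p : R[X], p.eval₂ ((Ideal.Quotient.mk P).comp R.subtype) z = 0 → ∀ n, (p.coeff n : B) ∈ P

theorem Subring.exists_isTranscendentalMod (R : Subring B) {P : Ideal B} [P.IsPrime]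
    (h₀ : ℵ₀ < #(B ⧸ P)) (hR : #R < #(B ⧸ P)) {W : Ideal B} (hW : ¬ W ≤ P) (b : B) :
    ∃ w ∈ W, R.IsTranscendentalMod P (Ideal.Quotient.mk P (b + w)) := by
  set φ := (Ideal.Quotient.mk P).comp R.subtype
  set A : Set (B ⧸ P) := ⋃ p : R[X], {z | z ∈ (p.map φ).roots}
  have hA : #A < #(B ⧸ P) :=
    calc #A ≤ #R[X] * ⨆ p : R[X], #{z | z ∈ (p.map φ).roots} := mk_iUnion_le _
    _ ≤ max #R ℵ₀ * ℵ₀ := mul_le_mul' cardinalMk_le_max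
          (ciSup_le' fun p => (p.map φ).roots.finite_toSet.lt_aleph0.le)
    _ < #(B ⧸ P) := mul_lt_of_lt h₀.le (max_lt hR h₀) h₀
  obtain ⟨w, hw, hwA⟩ := Ideal.exists_mem_mk_add_notMem hW hA b
  refine ⟨w, hw, fun p hp n => ?_⟩
  have hp0 : p.map φ = 0 := by
    by_contra hne
    exact hwA (mem_iUnion.2 ⟨p, (mem_roots hne).2 (by rwa [IsRoot, eval_map])⟩)
  simpa [φ, Ideal.Quotient.eq_zero_iff_mem] using congrArg (coeff · n) hp0

namespace Subring

noncomputable def adjoinSingleton (R : Subring B) (t : B) : Subring B :=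
  (eval₂RingHom R.subtype t).range

variable (R : Subring B) (t : B)

theorem le_adjoinSingleton : R ≤ R.adjoinSingleton t :=
  fun r hr => ⟨C ⟨r, hr⟩, eval₂_C _ _⟩

theorem mem_adjoinSingleton_self : t ∈ R.adjoinSingleton t := ⟨X, eval₂_X _ _⟩

theorem max_aleph0_mk_adjoinSingleton_le : max ℵ₀ #(R.adjoinSingleton t) ≤ max ℵ₀ #R :=
  max_le (le_max_left _ _) (mk_range_le.trans (cardinalMk_le_max.trans_eq (max_comm _ _)))

variable {R t}

theorem exists_pow_mul_mem_of_mem_adjoinSingleton {a : B} (ha : a ∈ R) (hat : a * t ∈ R)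
    {y : B} (hy : y ∈ R.adjoinSingleton t) : ∃ d : ℕ, a ^ d * y ∈ R := by
  obtain ⟨p, rfl⟩ := hy
  induction p using Polynomial.induction_on' with
  | add p q hp hq =>
    obtain ⟨d, hd⟩ := hp
    obtain ⟨e, he⟩ := hq
    refine ⟨d + e, ?_⟩
    have : a ^ (d + e) * eval₂RingHom R.subtype t (p + q) =
        a ^ e * (a ^ d * eval₂RingHom R.subtype t p) +
          a ^ d * (a ^ e * eval₂RingHom R.subtype t q) := by
      rw [map_add]; ring
    rw [this]
    exact R.add_mem (R.mul_mem (R.pow_mem ha e) hd) (R.mul_mem (R.pow_mem ha d) he)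
  | monomial n r =>
    refine ⟨n, ?_⟩
    rw [coe_eval₂RingHom, eval₂_monomial, subtype_apply, mul_left_comm, ← mul_pow]
    exact R.mul_mem r.2 (R.pow_mem hat n)

end Subring

def gluingLocus (Q₁ Q₂ : Ideal B) : Set B := {x | x ∈ Q₁ ↔ x ∈ Q₂}

variable {Q₁ Q₂ : Ideal B} {R : Subring B} {t : B}

theorem Subring.adjoinSingleton_subset_gluingLocus_of_mul_mem [Q₁.IsPrime] [Q₂.IsPrime]
    (hR : (R : Set B) ⊆ gluingLocus Q₁ Q₂) {a : B} (ha : a ∈ R) (ha₁ : a ∉ Q₁) (ha₂ : a ∉ Q₂)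
    (hat : a * t ∈ R) : (R.adjoinSingleton t : Set B) ⊆ gluingLocus Q₁ Q₂ := by
  intro y hy
  obtain ⟨d, hd⟩ := exists_pow_mul_mem_of_mem_adjoinSingleton ha hat hy
  have hcancel (Q : Ideal B) [Q.IsPrime] (haQ : a ∉ Q) : a ^ d * y ∈ Q ↔ y ∈ Q :=
    ⟨fun h => (Ideal.IsPrime.mem_or_mem ‹_› h).resolve_left
      (mt (Ideal.IsPrime.mem_of_pow_mem ‹_› d) haQ), Q.mul_mem_left _⟩
  simpa only [gluingLocus, mem_ofPred_eq, hcancel Q₁ ha₁, hcancel Q₂ ha₂] using hR hd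

theorem Subring.adjoinSingleton_subset_gluingLocus_of_isTranscendentalMod
    (hR : (R : Set B) ⊆ gluingLocus Q₁ Q₂)
    (h₁ : R.IsTranscendentalMod Q₁ (Ideal.Quotient.mk Q₁ t))
    (h₂ : R.IsTranscendentalMod Q₂ (Ideal.Quotient.mk Q₂ t)) :
    (R.adjoinSingleton t : Set B) ⊆ gluingLocus Q₁ Q₂ := by
  have transfer {Q Q' : Ideal B} (h : R.IsTranscendentalMod Q (Ideal.Quotient.mk Q t))
      (hQQ' : ∀ x ∈ R, x ∈ Q → x ∈ Q') (p : R[X]) (hp : p.eval₂ R.subtype t ∈ Q) :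
      p.eval₂ R.subtype t ∈ Q' := by
    rw [← Ideal.Quotient.eq_zero_iff_mem, hom_eval₂] at hp ⊢
    have hcoeff : p.map ((Ideal.Quotient.mk Q').comp R.subtype) = 0 := by
      ext n
      simpa [Ideal.Quotient.eq_zero_iff_mem] using hQQ' _ (p.coeff n).2 (h p hp n)
    rw [← eval_map, hcoeff, eval_zero]
  rintro _ ⟨p, rfl⟩
  exact ⟨transfer h₁ (fun x hx => (hR hx).1) p, transfer h₂ (fun x hx => (hR hx).2) p⟩

theorem coe_bot_subset_gluingLocus [Algebra ℚ B] (h₁ : Q₁ ≠ ⊤) (h₂ : Q₂ ≠ ⊤) :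
    ((⊥ : Subring B) : Set B) ⊆ gluingLocus Q₁ Q₂ := by
  intro x hx
  obtain ⟨n, rfl⟩ := Subring.mem_bot.1 hx
  rcases eq_or_ne n 0 with rfl | hn
  · simp [gluingLocus]
  · have hu : IsUnit (n : B) := by
      simpa using (isUnit_iff_ne_zero.2 (Int.cast_ne_zero.2 hn : (n : ℚ) ≠ 0)).map
        (algebraMap ℚ B)
    exact iff_of_false (fun h => h₁ (Ideal.eq_top_of_isUnit_mem _ h hu))
      (fun h => h₂ (Ideal.eq_top_of_isUnit_mem _ h hu))

end Adjunction

section Transfinite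

variable {A : Type u} [CommRing A]

/-- Sizes are compared through `max ℵ₀ #·` rather than against a bound `κ`: a union of fewer
than `κ` subrings of size `< κ` may have size `κ` when `κ` is singular. -/
def Subring.SmallExtension (G : Set A) (C R : Subring A) : Prop :=
  C ≤ R ∧ (R : Set A) ⊆ G ∧ max ℵ₀ #R ≤ max ℵ₀ #C

theorem Subring.SmallExtension.refl {G : Set A} {C : Subring A} (hC : (C : Set A) ⊆ G) :
    C.SmallExtension G C :=
  ⟨le_rfl, hC, le_rfl⟩

theorem Subring.SmallExtension.trans {G : Set A} {C R R' : Subring A}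
    (h : C.SmallExtension G R) (h' : R.SmallExtension G R') : C.SmallExtension G R' :=
  ⟨h.1.trans h'.1, h'.2.1, h'.2.2.trans h.2.2⟩

namespace Subring

variable {ι : Type u} {S : ι → Subring A}

theorem coe_iSup_subset_of_directed (hS : Directed (· ≤ ·) S) {G : Set A}
    (h₀ : ((⊥ : Subring A) : Set A) ⊆ G) (h : ∀ i, (S i : Set A) ⊆ G) :
    ((⨆ i, S i : Subring A) : Set A) ⊆ G := by
  cases isEmpty_or_nonempty ι
  · rwa [iSup_of_empty]
  · rw [coe_iSup_of_directed hS]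
    exact iUnion_subset h

theorem mk_iSup_le_of_directed (hS : Directed (· ≤ ·) S) {μ : Cardinal.{u}} (hμ : ℵ₀ ≤ μ)
    (hι : #ι ≤ μ) (h : ∀ i, #(S i) ≤ μ) : #(⨆ i, S i : Subring A) ≤ μ := by
  cases isEmpty_or_nonempty ι
  · rw [iSup_of_empty]
    exact (le_aleph0_iff_set_countable.2
      ((countable_range (Int.cast : ℤ → A)).mono fun x hx => mem_bot.1 hx)).trans hμ
  · change #((⨆ i, S i : Subring A) : Set A) ≤ μ
    rw [coe_iSup_of_directed hS]
    exact (mk_iUnion_le _).trans ((mul_le_mul' hι (ciSup_le' h)).trans (mul_eq_self hμ).le)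

end Subring

variable {ι : Type u} [LinearOrder ι] [WellFoundedLT ι] (next : ι → Subring A → Subring A)

noncomputable def transfiniteChain : ι → Subring A :=
  WellFoundedLT.fix fun x IH => next x (⨆ y : Iio x, IH y y.2)

theorem transfiniteChain_eq (x : ι) :
    transfiniteChain next x = next x (⨆ y : Iio x, transfiniteChain next y) :=
  WellFoundedLT.fix_eq _ x

variable {next}

theorem monotone_transfiniteChain (hnext : ∀ x C, C ≤ next x C) :
    Monotone (transfiniteChain next) := by
  intro y x h
  rcases h.lt_or_eq with h | rfl
  · rw [transfiniteChain_eq next x]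
    exact (le_iSup (fun z : Iio x => transfiniteChain next z) ⟨y, h⟩).trans (hnext _ _)
  · rfl

theorem iSup_Iio_transfiniteChain_subset_and_le (hnext : ∀ x C, C ≤ next x C) {G : Set A}
    (hG : ((⊥ : Subring A) : Set A) ⊆ G) {κ : Cardinal.{u}} (hκ : ℵ₀ < κ)
    (hIio : ∀ x : ι, #(Iio x) < κ)
    (hstep : ∀ x (C : Subring A), (C : Set A) ⊆ G → max ℵ₀ #C < κ →
      C.SmallExtension G (next x C))
    (x : ι) :
    ((⨆ y : Iio x, transfiniteChain next y : Subring A) : Set A) ⊆ G ∧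
      max ℵ₀ #(⨆ y : Iio x, transfiniteChain next y : Subring A) ≤ max ℵ₀ #(Iio x) := by
  induction x using WellFoundedLT.induction with
  | _ x IH =>
  have hchain : ∀ y : Iio x, (transfiniteChain next y : Set A) ⊆ G ∧
      max ℵ₀ #(transfiniteChain next y) ≤ max ℵ₀ #(Iio x) := by
    intro ⟨y, hy⟩
    obtain ⟨hG', hmk⟩ := IH y hy
    obtain ⟨-, hG'', hmk'⟩ := hstep y _ hG' (hmk.trans_lt (max_lt hκ (hIio y)))
    rw [transfiniteChain_eq]
    exact ⟨hG'', hmk'.trans (hmk.trans (max_le_max le_rfl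
      (mk_le_mk_of_subset (Iio_subset_Iio hy.le))))⟩
  have hdir : Directed (· ≤ ·) fun y : Iio x => transfiniteChain next y :=
    ((monotone_transfiniteChain hnext).comp (Subtype.mono_coe _)).directed_le
  exact ⟨Subring.coe_iSup_subset_of_directed hdir hG fun y => (hchain y).1,
    max_le (le_max_left _ _) (Subring.mk_iSup_le_of_directed hdir (le_max_left _ _)
      (le_max_right _ _) fun y => (le_max_right _ _).trans (hchain y).2)⟩

theorem Cardinal.exists_cofinal_schedule {T : Type u} [Nonempty T] {κ : Cardinal.{u}}
    (hκ : ℵ₀ ≤ κ) (hT : #T ≤ κ) :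
    ∃ task : κ.ord.ToType → T, ∀ τ x₀, ∃ x, x₀ < x ∧ task x = τ := by
  have hIic : ∀ x : κ.ord.ToType, #(Iic x) < κ := fun x => by
    rw [← Iio_insert]
    exact mk_insert_le.trans_lt (add_lt_of_lt hκ (by simpa using mk_Iio_lt x (by simp))
      (one_lt_aleph0.trans_le hκ))
  obtain ⟨e⟩ : Nonempty (κ.ord.ToType ≃ κ.ord.ToType × T) := Cardinal.eq.1 (by
    rw [mk_prod, lift_id, lift_id, mk_ord_toType, mul_eq_left hκ hT (mk_ne_zero T)])
  refine ⟨fun x => (e x).2, fun τ x₀ => ?_⟩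
  by_contra! h
  have hle : ∀ y, e.symm (y, τ) ≤ x₀ := fun y => not_lt.1 fun hlt => h _ hlt (by simp)
  refine (hIic x₀).not_ge ((mk_ord_toType κ).symm.trans_le
    (mk_le_of_injective (f := fun y => (⟨e.symm (y, τ), hle y⟩ : Iic x₀)) fun y y' hyy' => ?_))
  simpa using congrArg Subtype.val hyy'

theorem Subring.exists_meeting_requirements_of_schedule {T : Type u} {κ : Cardinal.{u}}
    (hκ : ℵ₀ < κ) [Nonempty ι] (hIio : ∀ x : ι, #(Iio x) < κ) (task : ι → T)
    (hcofinal : ∀ τ x₀, ∃ x, x₀ < x ∧ task x = τ)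
    {G : Set A} (hG : ((⊥ : Subring A) : Set A) ⊆ G)
    (data : T → Set A) (hdata : ∀ τ, (data τ).Finite) (goal : T → Subring A → Prop)
    (step : ∀ τ (C : Subring A), (C : Set A) ⊆ G → max ℵ₀ #C < κ → data τ ⊆ C →
      ∃ R, C.SmallExtension G R ∧ goal τ R) :
    ∃ S : Subring A, (S : Set A) ⊆ G ∧ ∀ τ, data τ ⊆ S → ∃ R ≤ S, goal τ R := by
  have hchoice : ∀ (x : ι) (C : Subring A), ∃ R, C ≤ R ∧ ((C : Set A) ⊆ G → max ℵ₀ #C < κ →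
      C.SmallExtension G R ∧ (data (task x) ⊆ C → goal (task x) R)) := by
    intro x C
    by_cases hC : (C : Set A) ⊆ G ∧ max ℵ₀ #C < κ
    · by_cases hd : data (task x) ⊆ C
      · obtain ⟨R, hR, hgoal⟩ := step _ C hC.1 hC.2 hd
        exact ⟨R, hR.1, fun _ _ => ⟨hR, fun _ => hgoal⟩⟩
      · exact ⟨C, le_rfl, fun hCG _ => ⟨.refl hCG, fun h => absurd h hd⟩⟩
    · exact ⟨C, le_rfl, fun h h' => absurd ⟨h, h'⟩ hC⟩
  choose next hle hnext using hchoice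
  have hpre := iSup_Iio_transfiniteChain_subset_and_le hle hG hκ hIio
    fun x C hC hs => (hnext x C hC hs).1
  have hnext_pre := fun x => hnext x _ (hpre x).1 ((hpre x).2.trans_lt (max_lt hκ (hIio x)))
  have hdir : Directed (· ≤ ·) (transfiniteChain next) :=
    (monotone_transfiniteChain hle).directed_le
  refine ⟨⨆ x, transfiniteChain next x,
    Subring.coe_iSup_subset_of_directed hdir hG fun x => ?_, fun τ hτ => ?_⟩
  · rw [transfiniteChain_eq]
    exact (hnext_pre x).1.2.1
  obtain ⟨_, ⟨x₀, rfl⟩, hx₀⟩ := (directedOn_range.2 fun x y =>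
      (hdir x y).imp fun _ h => ⟨SetLike.coe_subset_coe.2 h.1, SetLike.coe_subset_coe.2 h.2⟩
    ).exists_mem_subset_of_finite_of_subset_sUnion (range_nonempty _) (hdata τ)
      (by rwa [sUnion_range, ← Subring.coe_iSup_of_directed hdir])
  obtain ⟨x, hx₀x, rfl⟩ := hcofinal τ x₀
  refine ⟨transfiniteChain next x, le_iSup _ x, ?_⟩
  rw [transfiniteChain_eq]
  exact (hnext_pre x).2
    (hx₀.trans (le_iSup (fun y : Iio x => transfiniteChain next y) ⟨x₀, hx₀x⟩))

theorem Subring.exists_meeting_requirements {T : Type u} [Nonempty T] {κ : Cardinal.{u}}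
    (hκ : ℵ₀ < κ) (hT : #T ≤ κ) {G : Set A} (hG : ((⊥ : Subring A) : Set A) ⊆ G)
    (data : T → Set A) (hdata : ∀ τ, (data τ).Finite) (goal : T → Subring A → Prop)
    (step : ∀ τ (C : Subring A), (C : Set A) ⊆ G → max ℵ₀ #C < κ → data τ ⊆ C →
      ∃ R, C.SmallExtension G R ∧ goal τ R) :
    ∃ S : Subring A, (S : Set A) ⊆ G ∧ ∀ τ, data τ ⊆ S → ∃ R ≤ S, goal τ R := by
  obtain ⟨task, htask⟩ := Cardinal.exists_cofinal_schedule hκ.le hT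
  have : Nonempty κ.ord.ToType :=
    mk_ne_zero_iff.1 ((mk_ord_toType κ).trans_ne (aleph0_pos.trans hκ).ne')
  exact exists_meeting_requirements_of_schedule hκ
    (fun x => by simpa using mk_Iio_lt x (by simp)) task htask hG data hdata goal step

end Transfinite

section LocalGluing

open IsLocalRing

variable {B : Type*} [CommRing B] {Q₁ Q₂ : Ideal B} {C : Subring B}

theorem Subring.exists_smallExtension_mul_eq [Q₁.IsPrime] [Q₂.IsPrime]
    (hC : (C : Set B) ⊆ gluingLocus Q₁ Q₂) {a c f : B} (ha : a ∈ C) (ha₁ : a ∉ Q₁)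
    (ha₂ : a ∉ Q₂) (hc : c ∈ C) (hf : f * a = c) :
    ∃ R, C.SmallExtension (gluingLocus Q₁ Q₂) R ∧ ∃ t ∈ R, t * a = c :=
  ⟨C.adjoinSingleton f, ⟨C.le_adjoinSingleton f,
    C.adjoinSingleton_subset_gluingLocus_of_mul_mem hC ha ha₁ ha₂ (by rwa [mul_comm, hf]),
    C.max_aleph0_mk_adjoinSingleton_le f⟩, f, C.mem_adjoinSingleton_self f, hf⟩

theorem Subring.exists_notMem_mul_mem_span_succAbove [IsReduced B] (hQ₁ : Q₁ ∈ minimalPrimes B)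
    (hQ₂ : Q₂ ∈ minimalPrimes B) (hC : (C : Set B) ⊆ gluingLocus Q₁ Q₂) {n : ℕ}
    {a : Fin (n + 1) → B} (ha : ∀ i, a i ∈ C) (h : a 0 ∈ Q₁ ∨ n ≠ 0) :
    ∃ k, (∃ s ∉ Q₁, s * a k ∈ Ideal.span (range (a ∘ k.succAbove))) ∧
      ∃ s ∉ Q₂, s * a k ∈ Ideal.span (range (a ∘ k.succAbove)) := by
  by_cases h0 : a 0 ∈ Q₁
  · obtain ⟨s₁, hs₁, h₁⟩ := Ideal.exists_notMem_mul_eq_zero_of_mem_minimalPrimes hQ₁ h0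
    obtain ⟨s₂, hs₂, h₂⟩ :=
      Ideal.exists_notMem_mul_eq_zero_of_mem_minimalPrimes hQ₂ ((hC (ha 0)).1 h0)
    exact ⟨0, ⟨s₁, hs₁, h₁ ▸ zero_mem _⟩, s₂, hs₂, h₂ ▸ zero_mem _⟩
  · obtain ⟨m, rfl⟩ := Nat.exists_eq_succ_of_ne_zero (h.resolve_left h0)
    have h0J : a 0 ∈ Ideal.span (range (a ∘ (1 : Fin (m + 2)).succAbove)) :=
      Ideal.subset_span ⟨0, rfl⟩
    exact ⟨1, ⟨a 0, h0, Ideal.mul_mem_right _ _ h0J⟩,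
      a 0, mt (hC (ha 0)).2 h0, Ideal.mul_mem_right _ _ h0J⟩

variable [IsLocalRing B]

theorem IsLocalRing.maximalIdeal_not_le_of_not_le [Q₂.IsPrime] (h : ¬ Q₂ ≤ Q₁) :
    ¬ maximalIdeal B ≤ Q₁ :=
  fun hM => h ((le_maximalIdeal Ideal.IsPrime.ne_top').trans hM)

theorem IsLocalRing.span_range_eq_of_sub_mem {n : ℕ} {g t : Fin n → B}
    (h : ∀ i, t i - g i ∈ maximalIdeal B * Ideal.span (range g)) :
    Ideal.span (range t) = Ideal.span (range g) := by
  have hJ : Ideal.span (range t) ≤ Ideal.span (range g) := by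
    refine Ideal.span_le.2 (range_subset_iff.2 fun i => ?_)
    have := add_mem (Ideal.subset_span (mem_range_self i)) (Ideal.mul_le_right (h i))
    rwa [add_sub_cancel] at this
  refine le_antisymm hJ (Submodule.le_of_le_smul_of_le_jacobson_bot
    (Submodule.fg_span (finite_range g)) (maximalIdeal_le_jacobson ⊥)
    (Ideal.span_le.2 (range_subset_iff.2 fun i => ?_)))
  have := Submodule.sub_mem _
    (Submodule.mem_sup_left (Ideal.subset_span (mem_range_self (f := t) i)))
    (Submodule.mem_sup_right (h i))
  rwa [sub_sub_cancel, ← Ideal.smul_eq_mul] at this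

theorem Subring.exists_smallExtension_sub_mem [Q₁.IsPrime] [Q₂.IsPrime] (hQ : ¬ Q₁ ≤ Q₂)
    (hC : (C : Set B) ⊆ gluingLocus Q₁ Q₂) (hsize : max ℵ₀ #C < #(B ⧸ maximalIdeal B))
    {W : Ideal B} (hW₁ : ¬ W ≤ Q₁) (hW₂ : ¬ W ≤ Q₂) (b : B) :
    ∃ R, C.SmallExtension (gluingLocus Q₁ Q₂) R ∧ ∃ t ∈ R, t - b ∈ W := by
  have hsize' (P : Ideal B) [P.IsPrime] : max ℵ₀ #C < #(B ⧸ P) :=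
    hsize.trans_le (mk_quotient_maximalIdeal_le P)
  obtain ⟨w₀, hw₀, h₁⟩ := C.exists_isTranscendentalMod ((le_max_left _ _).trans_lt (hsize' Q₁))
    ((le_max_right _ _).trans_lt (hsize' Q₁)) hW₁ b
  -- the second correction is taken in `W * Q₁`, so that it does not move the residue mod `Q₁`
  obtain ⟨w₁, hw₁, h₂⟩ := C.exists_isTranscendentalMod ((le_max_left _ _).trans_lt (hsize' Q₂))
    ((le_max_right _ _).trans_lt (hsize' Q₂)) (W := W * Q₁)
    (by rw [Ideal.IsPrime.mul_le ‹_›]; tauto) (b + w₀)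
  have hmod : Ideal.Quotient.mk Q₁ (b + w₀ + w₁) = Ideal.Quotient.mk Q₁ (b + w₀) :=
    Ideal.Quotient.eq.2 (by simpa using Ideal.mul_le_right hw₁)
  refine ⟨C.adjoinSingleton (b + w₀ + w₁), ⟨C.le_adjoinSingleton _,
    C.adjoinSingleton_subset_gluingLocus_of_isTranscendentalMod hC (hmod ▸ h₁) h₂,
    C.max_aleph0_mk_adjoinSingleton_le _⟩, _, C.mem_adjoinSingleton_self _, ?_⟩
  rw [add_assoc, add_sub_cancel_left]
  exact W.add_mem hw₀ (Ideal.mul_le_left hw₁)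

theorem Subring.exists_smallExtension_forall_sub_mem [Q₁.IsPrime] [Q₂.IsPrime]
    (hQ : ¬ Q₁ ≤ Q₂) (hC : (C : Set B) ⊆ gluingLocus Q₁ Q₂)
    (hsize : max ℵ₀ #C < #(B ⧸ maximalIdeal B)) {W : Ideal B} (hW₁ : ¬ W ≤ Q₁)
    (hW₂ : ¬ W ≤ Q₂) {n : ℕ} (g : Fin n → B) :
    ∃ R, C.SmallExtension (gluingLocus Q₁ Q₂) R ∧
      ∃ t : Fin n → B, (∀ i, t i ∈ R) ∧ ∀ i, t i - g i ∈ W := by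
  induction n generalizing C with
  | zero => exact ⟨C, .refl hC, Fin.elim0, fun i => i.elim0, fun i => i.elim0⟩
  | succ n ih =>
    obtain ⟨R₁, hR₁, t, htR, htW⟩ := ih hC hsize (Fin.tail g)
    obtain ⟨R, hR, t₀, ht₀R, ht₀W⟩ :=
      exists_smallExtension_sub_mem hQ hR₁.2.1 (hR₁.2.2.trans_lt hsize) hW₁ hW₂ (g 0)
    exact ⟨R, hR₁.trans hR, Fin.cons t₀ t, Fin.forall_fin_succ.2 ⟨ht₀R, fun i => hR.1 (htR i)⟩,
      Fin.forall_fin_succ.2 ⟨ht₀W, htW⟩⟩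

theorem Subring.exists_smallExtension_span_inter_eq [Q₁.IsPrime] [Q₂.IsPrime]
    (hQ₁₂ : ¬ Q₁ ≤ Q₂) (hQ₂₁ : ¬ Q₂ ≤ Q₁) (hC : (C : Set B) ⊆ gluingLocus Q₁ Q₂)
    (hsize : max ℵ₀ #C < #(B ⧸ maximalIdeal B)) {n : ℕ} (g : Fin n → B)
    (h₁ : ¬ Ideal.span (range g) ≤ Q₁) (h₂ : ¬ Ideal.span (range g) ≤ Q₂) :
    ∃ R, C.SmallExtension (gluingLocus Q₁ Q₂) R ∧
      Ideal.span ((R : Set B) ∩ Ideal.span (range g)) = Ideal.span (range g) := by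
  have hW (P Q : Ideal B) [P.IsPrime] [Q.IsPrime] (hQP : ¬ Q ≤ P)
      (h : ¬ Ideal.span (range g) ≤ P) : ¬ maximalIdeal B * Ideal.span (range g) ≤ P := by
    rw [Ideal.IsPrime.mul_le ‹_›]
    exact not_or.2 ⟨maximalIdeal_not_le_of_not_le hQP, h⟩
  obtain ⟨R, hR, t, htR, htg⟩ := exists_smallExtension_forall_sub_mem hQ₁₂ hC hsize
    (hW Q₁ Q₂ hQ₂₁ h₁) (hW Q₂ Q₁ hQ₁₂ h₂) g
  have ht := span_range_eq_of_sub_mem htg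
  refine ⟨R, hR, le_antisymm (Ideal.span_le.2 inter_subset_right) ?_⟩
  calc Ideal.span (range g) = Ideal.span (range t) := ht.symm
    _ ≤ _ := Ideal.span_mono (range_subset_iff.2 fun i =>
      mem_inter (htR i) (ht ▸ Ideal.subset_span (mem_range_self i)))

theorem Subring.exists_smallExtension_sub_mul_mem_span [Q₁.IsPrime] [Q₂.IsPrime]
    (hQ : ¬ Q₁ ≤ Q₂) (hC : (C : Set B) ⊆ gluingLocus Q₁ Q₂)
    (hsize : max ℵ₀ #C < #(B ⧸ maximalIdeal B)) {n : ℕ} {a : Fin (n + 1) → B} {c : B}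
    (hca : c ∈ Ideal.span (range a)) (k : Fin (n + 1))
    (h₁ : ∃ s ∉ Q₁, s * a k ∈ Ideal.span (range (a ∘ k.succAbove)))
    (h₂ : ∃ s ∉ Q₂, s * a k ∈ Ideal.span (range (a ∘ k.succAbove))) :
    ∃ R, C.SmallExtension (gluingLocus Q₁ Q₂) R ∧
      ∃ t ∈ R, c - t * a k ∈ Ideal.span (range (a ∘ k.succAbove)) := by
  set J := Ideal.span (range (a ∘ k.succAbove))
  have hW {Q : Ideal B} : (∃ s ∉ Q, s * a k ∈ J) → ¬ J.colon (Ideal.span {a k}) ≤ Q :=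
    fun ⟨s, hs, hsJ⟩ hle => hs (hle (Ideal.mem_colon_span_singleton.2 hsJ))
  obtain ⟨f, rfl⟩ := Ideal.mem_span_range_iff_exists_fun.1 hca
  obtain ⟨R, hR, t, htR, htW⟩ := exists_smallExtension_sub_mem hQ hC hsize (hW h₁) (hW h₂) (f k)
  refine ⟨R, hR, t, htR, ?_⟩
  rw [Fin.sum_univ_succAbove _ k,
    show ∀ x : B, f k * a k + x - t * a k = x - (t - f k) * a k from fun x => by ring]
  exact J.sub_mem (J.sum_mem fun i _ => J.mul_mem_left _ (Ideal.subset_span (mem_range_self i)))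
    (Ideal.mem_colon_span_singleton.1 htW)

theorem Subring.exists_smallExtension_sum_eq [IsReduced B] (hQ₁ : Q₁ ∈ minimalPrimes B)
    (hQ₂ : Q₂ ∈ minimalPrimes B) (hQ : ¬ Q₁ ≤ Q₂) (hC : (C : Set B) ⊆ gluingLocus Q₁ Q₂)
    (hsize : max ℵ₀ #C < #(B ⧸ maximalIdeal B)) {n : ℕ} {a : Fin n → B} (ha : ∀ i, a i ∈ C)
    {c : B} (hc : c ∈ C) (hca : c ∈ Ideal.span (range a)) :
    ∃ R, C.SmallExtension (gluingLocus Q₁ Q₂) R ∧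
      ∃ f : Fin n → B, (∀ i, f i ∈ R) ∧ ∑ i, f i * a i = c := by
  have := hQ₁.1.1
  have := hQ₂.1.1
  induction n generalizing C c with
  | zero =>
    refine ⟨C, .refl hC, Fin.elim0, fun i => i.elim0, ?_⟩
    simpa [eq_comm] using hca
  | succ n ih =>
    by_cases h : a 0 ∈ Q₁ ∨ n ≠ 0
    · obtain ⟨k, h₁, h₂⟩ := exists_notMem_mul_mem_span_succAbove hQ₁ hQ₂ hC ha h
      obtain ⟨R₁, hR₁, t, htR₁, hJ⟩ :=
        exists_smallExtension_sub_mul_mem_span hQ hC hsize hca k h₁ h₂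
      obtain ⟨R, hR, f, hfR, hf⟩ := ih hR₁.2.1 (hR₁.2.2.trans_lt hsize) (fun i => hR₁.1 (ha _))
        (R₁.sub_mem (hR₁.1 hc) (R₁.mul_mem htR₁ (hR₁.1 (ha k)))) hJ
      refine ⟨R, hR₁.trans hR, k.insertNth t f,
        (Fin.forall_iff_succAbove k).2 ⟨by simpa using hR.1 htR₁, by simpa using hfR⟩, ?_⟩
      rw [Fin.sum_univ_succAbove _ k]
      simp [hf]
    · obtain ⟨h0, rfl⟩ : a 0 ∉ Q₁ ∧ n = 0 := by simpa using h
      obtain ⟨f, hf⟩ := Ideal.mem_span_range_iff_exists_fun.1 hca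
      obtain ⟨R, hR, t, htR, ht⟩ := exists_smallExtension_mul_eq hC (ha 0) h0
        (mt (hC (ha 0)).2 h0) hc (f := f 0) (by simpa using hf)
      exact ⟨R, hR, fun _ => t, fun _ => htR, by simpa using ht⟩

end LocalGluing

section Requirements

open IsLocalRing

theorem Cardinal.mk_sigma_fin_arrow (α : Type u) [Infinite α] : #(Σ n, Fin n → α) = #α := by
  rw [← mk_list_eq_mk α]
  exact mk_congr List.equivSigmaTuple.symm

variable {B : Type u}

abbrev GluingTask (B : Type u) := B ⊕ (Σ n, Fin n → B) ⊕ B × (Σ n, Fin n → B)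

def GluingTask.data : GluingTask B → Set B
  | .inr (.inr (c, ⟨_, a⟩)) => insert c (range a)
  | _ => ∅

def GluingTask.goal [CommRing B] [IsLocalRing B] (Q₁ Q₂ : Ideal B) :
    GluingTask B → Subring B → Prop
  | .inl b, R => ∃ s ∈ R, s - b ∈ maximalIdeal B ^ 2
  | .inr (.inl ⟨_, g⟩), R => ¬ Ideal.span (range g) ≤ Q₁ → ¬ Ideal.span (range g) ≤ Q₂ →
      Ideal.span ((R : Set B) ∩ Ideal.span (range g)) = Ideal.span (range g)
  | .inr (.inr (c, ⟨n, a⟩)), R => c ∈ Ideal.span (range a) →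
      ∃ f : Fin n → B, (∀ i, f i ∈ R) ∧ ∑ i, f i * a i = c

theorem GluingTask.mk_le [Infinite B] : #(GluingTask B) ≤ #B := by
  simp only [GluingTask, mk_sum, mk_prod, lift_id, mk_sigma_fin_arrow]
  rw [mul_eq_self (aleph0_le_mk B), add_eq_self (aleph0_le_mk B), add_eq_self (aleph0_le_mk B)]

theorem GluingTask.finite_data (τ : GluingTask B) : τ.data.Finite := by
  rcases τ with _ | _ | ⟨c, n, a⟩ <;> simp [data, finite_range]

theorem GluingTask.exists_smallExtension_goal [CommRing B] [IsLocalRing B] [IsReduced B]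
    {Q₁ Q₂ : Ideal B} (hQ₁ : Q₁ ∈ minimalPrimes B) (hQ₂ : Q₂ ∈ minimalPrimes B)
    (hQ₁₂ : ¬ Q₁ ≤ Q₂) (hQ₂₁ : ¬ Q₂ ≤ Q₁) (τ : GluingTask B) {C : Subring B}
    (hC : (C : Set B) ⊆ gluingLocus Q₁ Q₂) (hsize : max ℵ₀ #C < #(B ⧸ maximalIdeal B))
    (hdata : τ.data ⊆ C) :
    ∃ R, C.SmallExtension (gluingLocus Q₁ Q₂) R ∧ τ.goal Q₁ Q₂ R := by
  have := hQ₁.1.1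
  have := hQ₂.1.1
  rcases τ with b | ⟨n, g⟩ | ⟨c, n, a⟩
  · have hM (P Q : Ideal B) [P.IsPrime] [Q.IsPrime] (hQP : ¬ Q ≤ P) :
        ¬ maximalIdeal B ^ 2 ≤ P := by
      rw [sq, Ideal.IsPrime.mul_le ‹_›, or_self]
      exact maximalIdeal_not_le_of_not_le hQP
    exact C.exists_smallExtension_sub_mem hQ₁₂ hC hsize (hM Q₁ Q₂ hQ₂₁) (hM Q₂ Q₁ hQ₁₂) b
  · by_cases h : ¬ Ideal.span (range g) ≤ Q₁ ∧ ¬ Ideal.span (range g) ≤ Q₂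
    · obtain ⟨R, hR, hspan⟩ :=
        C.exists_smallExtension_span_inter_eq hQ₁₂ hQ₂₁ hC hsize g h.1 h.2
      exact ⟨R, hR, fun _ _ => hspan⟩
    · exact ⟨C, .refl hC, fun h₁ h₂ => absurd ⟨h₁, h₂⟩ h⟩
  · obtain ⟨hc, ha⟩ := insert_subset_iff.1 hdata
    by_cases hca : c ∈ Ideal.span (range a)
    · obtain ⟨R, hR, hf⟩ :=
        C.exists_smallExtension_sum_eq hQ₁ hQ₂ hQ₁₂ hC hsize (range_subset_iff.1 ha) hc hca
      exact ⟨R, hR, fun _ => hf⟩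
    · exact ⟨C, .refl hC, fun h => absurd h hca⟩

theorem exists_subring_gluing_minimalPrimes [CommRing B] [IsLocalRing B] [IsReduced B]
    [Algebra ℚ B] (hκ : ℵ₀ < #(B ⧸ maximalIdeal B)) (hB : #B ≤ #(B ⧸ maximalIdeal B))
    {Q₁ Q₂ : Ideal B} (hQ₁ : Q₁ ∈ minimalPrimes B) (hQ₂ : Q₂ ∈ minimalPrimes B)
    (hne : Q₁ ≠ Q₂) :
    ∃ S : Subring B, (S : Set B) ⊆ gluingLocus Q₁ Q₂ ∧
      (∀ b, ∃ s ∈ S, s - b ∈ maximalIdeal B ^ 2) ∧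
      (∀ n (g : Fin n → B), ¬ Ideal.span (range g) ≤ Q₁ → ¬ Ideal.span (range g) ≤ Q₂ →
        Ideal.span ((S : Set B) ∩ Ideal.span (range g)) = Ideal.span (range g)) ∧
      (∀ n (a : Fin n → B) (c : B), (∀ i, a i ∈ S) → c ∈ S → c ∈ Ideal.span (range a) →
        ∃ f : Fin n → B, (∀ i, f i ∈ S) ∧ ∑ i, f i * a i = c) := by
  have hQ₁₂ : ¬ Q₁ ≤ Q₂ := fun h => hne (le_antisymm h (hQ₂.2 hQ₁.1 h))
  have hQ₂₁ : ¬ Q₂ ≤ Q₁ := fun h => hne (le_antisymm (hQ₁.2 hQ₂.1 h) h)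
  have : Infinite B := infinite_iff.2 (hκ.le.trans (mk_le_of_surjective Quotient.mk_surjective))
  obtain ⟨S, hSG, hS⟩ := Subring.exists_meeting_requirements hκ (GluingTask.mk_le.trans hB)
    (coe_bot_subset_gluingLocus hQ₁.1.1.ne_top hQ₂.1.1.ne_top) GluingTask.data
    GluingTask.finite_data (GluingTask.goal Q₁ Q₂)
    fun τ _ hC hsize hdata => τ.exists_smallExtension_goal hQ₁ hQ₂ hQ₁₂ hQ₂₁ hC hsize hdata
  refine ⟨S, hSG, fun b => ?_, fun n g h₁ h₂ => ?_, fun n a c ha hc hca => ?_⟩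
  · obtain ⟨R, hRS, s, hs, hsb⟩ := hS (.inl b) (empty_subset _)
    exact ⟨s, hRS hs, hsb⟩
  · obtain ⟨R, hRS, hR⟩ := hS (.inr (.inl ⟨n, g⟩)) (empty_subset _)
    exact le_antisymm (Ideal.span_le.2 inter_subset_right)
      ((hR h₁ h₂).symm.le.trans (Ideal.span_mono (inter_subset_inter_left _ hRS)))
  · obtain ⟨R, hRS, hR⟩ :=
      hS (.inr (.inr ⟨c, n, a⟩)) (insert_subset hc (range_subset_iff.2 ha))
    obtain ⟨f, hfR, hf⟩ := hR hca
    exact ⟨f, fun i => hRS (hfR i), hf⟩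

end Requirements

namespace Subring

variable {B : Type*} [CommRing B] {S : Subring B}

theorem comap_map_subtype_eq_of_forall_sum_eq
    (hS : ∀ n (a : Fin n → B) (c : B), (∀ i, a i ∈ S) → c ∈ S → c ∈ Ideal.span (range a) →
      ∃ f : Fin n → B, (∀ i, f i ∈ S) ∧ ∑ i, f i * a i = c)
    {I : Ideal S} (hI : I.FG) : (I.map S.subtype).comap S.subtype = I := by
  refine le_antisymm (fun x hx => ?_) Ideal.le_comap_map
  obtain ⟨n, g, rfl⟩ := Submodule.fg_iff_exists_fin_generating_family.1 hI
  rw [Ideal.mem_comap, Ideal.map_span, ← range_comp] at hx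
  obtain ⟨f, hfS, hf⟩ := hS n (S.subtype ∘ g) x (fun i => (g i).2) x.2 hx
  have hx : x = ∑ i, ⟨f i, hfS i⟩ * g i := Subtype.ext (by simpa using hf.symm)
  rw [hx]
  exact Ideal.sum_mem _ fun i _ => Ideal.mul_mem_left _ _ (Ideal.subset_span (mem_range_self i))

theorem isUnit_of_comap_map_span_singleton {x : S} (hx : IsUnit (x : B))
    (h : ((Ideal.span {x}).map S.subtype).comap S.subtype = Ideal.span {x}) : IsUnit x := by
  rw [← Ideal.span_singleton_eq_top, ← h, Ideal.map_span, image_singleton, coe_subtype,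
    Ideal.span_singleton_eq_top.2 hx, Ideal.comap_top]

theorem isLocalRing_of_isUnit [IsLocalRing B]
    (h : ∀ x : S, (x : B) ∉ IsLocalRing.maximalIdeal B → IsUnit x) :
    IsLocalRing S ∧ ∀ x : S, ¬ IsUnit x ↔ (x : B) ∈ IsLocalRing.maximalIdeal B := by
  have hiff (x : S) : ¬ IsUnit x ↔ (x : B) ∈ IsLocalRing.maximalIdeal B :=
    ⟨fun hx => not_not.1 (mt (h x) hx),
      fun hx hu => (IsLocalRing.mem_maximalIdeal _).1 hx (hu.map S.subtype)⟩
  exact ⟨.of_nonunits_add fun a b ha hb => (hiff _).2 (add_mem ((hiff a).1 ha) ((hiff b).1 hb)),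
    hiff⟩

end Subring

/-- Theorem (gluing two minimal primes): there is a quasi-local subring `S` of `B` with
maximal ideal `S ∩ M`, surjecting onto `B/M²`, with good contraction of finitely
generated ideals, gluing `Q₁` and `Q₂`, and containing generating sets for all ideals
of `B` not contained in `Q₁` or `Q₂`. -/
theorem stmt_17 (B : Type*) [CommRing B] [IsNoetherianRing B] [IsLocalRing B] [IsReduced B]
    [Algebra ℚ B]
    [Uncountable (B ⧸ IsLocalRing.maximalIdeal B)]
    (hBcard : Cardinal.mk B = Cardinal.mk (B ⧸ IsLocalRing.maximalIdeal B))
    (Q₁ Q₂ : Ideal B) (hQ₁ : Q₁ ∈ minimalPrimes B) (hQ₂ : Q₂ ∈ minimalPrimes B)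
    (hne : Q₁ ≠ Q₂) :
    ∃ S : Subring B,
      IsLocalRing ↥S ∧
      (∀ x : ↥S, ¬ IsUnit x ↔ (x : B) ∈ IsLocalRing.maximalIdeal B) ∧
      Function.Surjective
        ((Ideal.Quotient.mk ((IsLocalRing.maximalIdeal B) ^ 2)).comp S.subtype) ∧
      (∀ I : Ideal ↥S, I.FG → (I.map S.subtype).comap S.subtype = I) ∧
      Q₁.comap S.subtype = Q₂.comap S.subtype ∧
      (∀ J : Ideal B, ¬ J ≤ Q₁ → ¬ J ≤ Q₂ → Ideal.span ((S : Set B) ∩ (J : Set B)) = J) := by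
  obtain ⟨S, hglue, hcoset, hgen, hcontr⟩ :=
    exists_subring_gluing_minimalPrimes aleph0_lt_mk hBcard.le hQ₁ hQ₂ hne
  have hfg (I : Ideal S) (hI : I.FG) : (I.map S.subtype).comap S.subtype = I :=
    Subring.comap_map_subtype_eq_of_forall_sum_eq hcontr hI
  obtain ⟨hloc, hunit⟩ := Subring.isLocalRing_of_isUnit fun x hx =>
    Subring.isUnit_of_comap_map_span_singleton (IsLocalRing.notMem_maximalIdeal.1 hx)
      (hfg _ (Submodule.fg_span_singleton x))
  refine ⟨S, hloc, hunit, fun y => ?_, hfg, ?_, fun J h₁ h₂ => ?_⟩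
  · obtain ⟨b, rfl⟩ := Ideal.Quotient.mk_surjective y
    obtain ⟨s, hs, hsb⟩ := hcoset b
    exact ⟨⟨s, hs⟩, Ideal.Quotient.eq.2 hsb⟩
  · ext x
    exact hglue x.2
  · obtain ⟨n, g, rfl⟩ :=
      Submodule.fg_iff_exists_fin_generating_family.1 (IsNoetherian.noetherian J)
    exact hgen n g h₁ h₂
end
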